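/- arXiv:2404.06172 — 2 statements merged into one kernel-verified Lean document; each statement's English description precedes it below -/
import Mathlib

section
/- With m_h(ξ) = sqrt(tanh(h ξ)/ξ) for ξ ≠ 0 and m_h(0) = sqrt(h) (the Whitham symbol with depth h > 0), setting c_h = sqrt(tanh h), the coefficient θ_b := -m_h'(1) - (1/2) m_h''(1) equals [ (h(1 - c_h⁴) - c_h²)² + 4h² c_h⁴ (1 - c_h⁴) ] / (8 c_h³), and in particular θ_b > 0 for every h > 0 with h(1-c_h⁴) ≠ c_h² or c_h⁴ < 1. -/
/-!
For `ξ > 0` the symbol is `m = √F` with `F ξ = tanh (h ξ) / ξ`, so `m' = F' / (2m)` and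
`m'' = F'' / (2m) - F'^2 / (4m^3)`. At `ξ = 1` we have `m = c`, and `tanh' = 1 - tanh²` gives
`F'(1) = h(1 - c⁴) - c²` and `F''(1) = 2c² - 2h(1 - c⁴) - 2h²c²(1 - c⁴)`. In `θ_b` the parts
linear in `F'` and `F''` then collapse to `4h²c⁴(1 - c⁴) / (8c³)`, which is positive because
`c⁴ = tanh² h < 1`.
-/

open Real Filter Topology

namespace Real

theorem hasDerivAt_tanh (x : ℝ) : HasDerivAt tanh (1 - tanh x ^ 2) x := by
  have h := (hasDerivAt_sinh x).fun_div (hasDerivAt_cosh x) (cosh_pos x).ne'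
  rw [show (fun y => sinh y / cosh y) = tanh from funext fun y => (tanh_eq_sinh_div_cosh y).symm]
    at h
  refine h.congr_deriv ?_
  rw [tanh_eq_sinh_div_cosh, div_pow, one_sub_div (pow_ne_zero 2 (cosh_pos x).ne')]
  ring

theorem tanh_pos {x : ℝ} (hx : 0 < x) : 0 < tanh x := by
  rw [tanh_eq_sinh_div_cosh]
  exact div_pos (sinh_pos_iff.2 hx) (cosh_pos x)

end Real

theorem hasDerivAt_deriv_sqrt {f f' : ℝ → ℝ} {f'' x : ℝ}
    (hf : ∀ᶠ y in 𝓝 x, HasDerivAt f (f' y) y) (hf' : HasDerivAt f' f'' x) (hx : 0 < f x) :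
    HasDerivAt (deriv fun y => √(f y)) (f'' / (2 * √(f x)) - f' x ^ 2 / (4 * √(f x) ^ 3)) x := by
  have hpos : ∀ᶠ y in 𝓝 x, 0 < f y :=
    continuousAt_const.eventually_lt hf.self_of_nhds.continuousAt hx
  have hderiv : (deriv fun y => √(f y)) =ᶠ[𝓝 x] fun y => f' y / (2 * √(f y)) := by
    filter_upwards [hf, hpos] with y hy hfy
    exact (hy.sqrt hfy.ne').deriv
  have hsqrt : 0 < √(f x) := sqrt_pos.2 hx
  have hquot := hf'.fun_div ((hf.self_of_nhds.sqrt hx.ne').const_mul 2) (by positivity)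
  refine (hquot.congr_of_eventuallyEq hderiv).congr_deriv ?_
  field_simp
  ring

theorem hasDerivAt_tanh_mul (h x : ℝ) :
    HasDerivAt (fun y => tanh (h * y)) (h * (1 - tanh (h * x) ^ 2)) x := by
  have hlin : HasDerivAt (fun y => h * y) h x := by simpa using (hasDerivAt_id x).const_mul h
  exact ((hasDerivAt_tanh (h * x)).comp x hlin).congr_deriv (mul_comm _ _)

theorem hasDerivAt_tanh_mul_div (h : ℝ) {x : ℝ} (hx : x ≠ 0) :
    HasDerivAt (fun y => tanh (h * y) / y)
      (h * (1 - tanh (h * x) ^ 2) / x - tanh (h * x) / x ^ 2) x := by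
  refine ((hasDerivAt_tanh_mul h x).fun_div (hasDerivAt_id' x) hx).congr_deriv ?_
  field_simp

theorem hasDerivAt_deriv_tanh_mul_div (h : ℝ) {x : ℝ} (hx : x ≠ 0) :
    HasDerivAt (fun y => h * (1 - tanh (h * y) ^ 2) / y - tanh (h * y) / y ^ 2)
      (-2 * h ^ 2 * tanh (h * x) * (1 - tanh (h * x) ^ 2) / x
        - 2 * h * (1 - tanh (h * x) ^ 2) / x ^ 2 + 2 * tanh (h * x) / x ^ 3) x := by
  have hT := hasDerivAt_tanh_mul h x
  have hA := (((hT.fun_pow 2).const_sub 1).const_mul h).fun_div (hasDerivAt_id' x) hx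
  have hB := hT.fun_div (hasDerivAt_pow 2 x) (pow_ne_zero 2 hx)
  refine (hA.sub hB).congr_deriv ?_
  field_simp
  ring

theorem deriv_sqrt_tanh_mul_div_one {h : ℝ} (hh : 0 < h) :
    deriv (fun ξ => √(tanh (h * ξ) / ξ)) 1 = (h * (1 - tanh h ^ 2) - tanh h) / (2 * √(tanh h)) := by
  have hF1 : 0 < tanh (h * 1) / 1 := by simpa using tanh_pos hh
  rw [((hasDerivAt_tanh_mul_div h one_ne_zero).sqrt hF1.ne').deriv]
  simp only [mul_one, div_one, one_pow]

theorem deriv_deriv_sqrt_tanh_mul_div_one {h : ℝ} (hh : 0 < h) :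
    deriv (deriv fun ξ => √(tanh (h * ξ) / ξ)) 1 =
      (-2 * h ^ 2 * tanh h * (1 - tanh h ^ 2) - 2 * h * (1 - tanh h ^ 2) + 2 * tanh h)
          / (2 * √(tanh h))
        - (h * (1 - tanh h ^ 2) - tanh h) ^ 2 / (4 * √(tanh h) ^ 3) := by
  have hF : ∀ᶠ ξ in 𝓝 (1 : ℝ), HasDerivAt (fun y => tanh (h * y) / y)
      (h * (1 - tanh (h * ξ) ^ 2) / ξ - tanh (h * ξ) / ξ ^ 2) ξ := by
    filter_upwards [eventually_ne_nhds one_ne_zero] with ξ hξ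
    exact hasDerivAt_tanh_mul_div h hξ
  have hF1 : 0 < tanh (h * 1) / 1 := by simpa using tanh_pos hh
  rw [(hasDerivAt_deriv_sqrt hF (hasDerivAt_deriv_tanh_mul_div h one_ne_zero) hF1).deriv]
  simp only [mul_one, div_one, one_pow]

/-- For the Whitham symbol `m_h(ξ) = √(tanh(hξ)/ξ)` (with `m_h(0) = √h`), setting
`c_h = √(tanh h)`, the coefficient `θ_b = -m_h'(1) - (1/2) m_h''(1)` equals
`[(h(1-c_h⁴)-c_h²)² + 4h²c_h⁴(1-c_h⁴)]/(8c_h³)`; in particular `θ_b > 0` whenever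
`h(1-c_h⁴) ≠ c_h²` or `c_h⁴ < 1`. -/
theorem stmt_10 (h : ℝ) (hh : 0 < h) :
    let m : ℝ → ℝ := fun ξ => if ξ = 0 then Real.sqrt h else Real.sqrt (Real.tanh (h * ξ) / ξ)
    let c : ℝ := Real.sqrt (Real.tanh h)
    let θb : ℝ := -deriv m 1 - (1 / 2) * deriv (deriv m) 1
    θb = ((h * (1 - c ^ 4) - c ^ 2) ^ 2 + 4 * h ^ 2 * c ^ 4 * (1 - c ^ 4)) / (8 * c ^ 3) ∧
    ((h * (1 - c ^ 4) ≠ c ^ 2 ∨ c ^ 4 < 1) → 0 < θb) := by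
  intro m c θb
  have hm : m =ᶠ[𝓝 1] fun ξ => √(tanh (h * ξ) / ξ) := by
    filter_upwards [eventually_ne_nhds one_ne_zero] with ξ hξ
    simp only [m, if_neg hξ]
  have hc : 0 < c := sqrt_pos.2 (tanh_pos hh)
  have hc2 : tanh h = c ^ 2 := (sq_sqrt (tanh_pos hh).le).symm
  have hθ : θb = ((h * (1 - c ^ 4) - c ^ 2) ^ 2 + 4 * h ^ 2 * c ^ 4 * (1 - c ^ 4))
      / (8 * c ^ 3) := by
    simp only [θb, hm.deriv_eq, hm.deriv.deriv_eq, deriv_sqrt_tanh_mul_div_one hh,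
      deriv_deriv_sqrt_tanh_mul_div_one hh]
    rw [show √(tanh h) = c from rfl, hc2]
    field_simp
    ring
  have hc4 : c ^ 4 < 1 := by
    rw [show c ^ 4 = tanh h ^ 2 by rw [hc2]; ring]
    exact tanh_sq_lt_one h
  refine ⟨hθ, fun _ => hθ ▸ div_pos ?_ (by positivity)⟩
  exact add_pos_of_nonneg_of_pos (sq_nonneg _) (mul_pos (by positivity) (sub_pos.2 hc4))
end

section
/- For the Kawahara equation with symbol m(ξ) = aξ² + bξ⁴ (b > 0), the Whitham–Benjamin coefficient θ_WB = θ_w θ_b = -(3a + 10b)(3a + 25b) / (3(a + 5b)(3a + 5b)) is strictly positive if and only if either -25b/3 < a < -5b or -10b/3 < a < -5b/3. -/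
/-- For the Kawahara equation, the Whitham–Benjamin coefficient
`θ_WB = -(3a+10b)(3a+25b)/(3(a+5b)(3a+5b))` is strictly positive iff
`-25b/3 < a < -5b` or `-10b/3 < a < -5b/3`. -/
theorem stmt_12 (a b : ℝ) (hb : 0 < b)
    (h1 : a ≠ -5 * b / 3) (h2 : a ≠ -10 * b / 3) (h3 : a ≠ -5 * b) (h4 : a ≠ -25 * b / 3) :
    0 < -((3 * a + 10 * b) * (3 * a + 25 * b)) / (3 * (a + 5 * b) * (3 * a + 5 * b)) ↔
      (-25 * b / 3 < a ∧ a < -5 * b) ∨ (-10 * b / 3 < a ∧ a < -5 * b / 3) := by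
  set N := -((3 * a + 10 * b) * (3 * a + 25 * b)) with hN
  set D := 3 * (a + 5 * b) * (3 * a + 5 * b) with hD
  rcases h4.lt_or_gt with h4|h4
  · -- a < -25b/3 : expression negative
    have hDpos : 0 < D := by nlinarith
    have hNneg : N < 0 := by nlinarith
    constructor
    · intro h; exact absurd h (not_lt.2 (div_nonpos_of_nonpos_of_nonneg hNneg.le hDpos.le))
    · rintro (⟨p,q⟩|⟨p,q⟩) <;> linarith
  rcases h3.lt_or_gt with h3|h3
  · -- -25b/3 < a < -5b : positive
    have hDpos : 0 < D := by nlinarith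
    have hNpos : 0 < N := by nlinarith
    exact ⟨fun _ => Or.inl ⟨h4, h3⟩, fun _ => div_pos hNpos hDpos⟩
  rcases h2.lt_or_gt with h2|h2
  · -- -5b < a < -10b/3 : negative
    have hDneg : D < 0 := by nlinarith
    have hNpos : 0 < N := by nlinarith
    constructor
    · intro h; exact absurd h (not_lt.2 (div_nonpos_of_nonneg_of_nonpos hNpos.le hDneg.le))
    · rintro (⟨p,q⟩|⟨p,q⟩) <;> linarith
  rcases h1.lt_or_gt with h1|h1
  · -- -10b/3 < a < -5b/3 : positive
    have hDneg : D < 0 := by nlinarith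
    have hNneg : N < 0 := by nlinarith
    exact ⟨fun _ => Or.inr ⟨h2, h1⟩, fun _ => div_pos_of_neg_of_neg hNneg hDneg⟩
  · -- a > -5b/3 : negative
    have hDpos : 0 < D := by nlinarith
    have hNneg : N < 0 := by nlinarith
    constructor
    · intro h; exact absurd h (not_lt.2 (div_nonpos_of_nonpos_of_nonneg hNneg.le hDpos.le))
    · rintro (⟨p,q⟩|⟨p,q⟩) <;> linarith
end
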